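/- Let K be a field and P an ordering of K. Then A(P) is a subring of K which is a valuation ring of K (for every x ∈ K with x ≠ 0, either x ∈ A(P) or x⁻¹ ∈ A(P)), I(P) is an ideal of A(P), and I(P) is the unique maximal ideal of A(P); moreover the units of A(P) are exactly A(P) \ I(P). -/

import Mathlib

/-- An ordering of a (comm) ring `K`: `P + P ⊆ P`, `P·P ⊆ P`, `-1 ∉ P`, `P ∪ (-P) = K`. -/
def IsOrdering {K : Type*} [CommRing K] (P : Set K) : Prop :=
  (∀ x ∈ P, ∀ y ∈ P, x + y ∈ P) ∧ (∀ x ∈ P, ∀ y ∈ P, x * y ∈ P) ∧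
    (-1 : K) ∉ P ∧ ∀ x : K, x ∈ P ∨ -x ∈ P

/-- `sumsOfPowers K n` is the set of finite sums of `n`-th powers of elements of `K`. -/
def sumsOfPowers (K : Type*) [CommRing K] (n : ℕ) : Set K :=
  {a | ∃ (m : ℕ) (f : Fin m → K), a = ∑ i, f i ^ n}

/-- `A(P)`: the convex hull of `ℚ` in `K` with respect to the ordering `P`
(writing `x ≤_P y` for `y - x ∈ P`): `{a | ∃ r ∈ ℚ, -r ≤_P a ≤_P r}`. -/
def ratHull {K : Type*} [Field K] (P : Set K) : Set K :=
  {a | ∃ r : ℚ, a + (r : K) ∈ P ∧ (r : K) - a ∈ P}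

/-- `I(P) = {a | ∀ r ∈ ℚ, r > 0 → -r ≤_P a ≤_P r}`. -/
def ratInfinitesimals {K : Type*} [Field K] (P : Set K) : Set K :=
  {a | ∀ r : ℚ, 0 < r → a + (r : K) ∈ P ∧ (r : K) - a ∈ P}

/-!
An ordering `P` is the positive cone of a linear order making `K` an ordered field. For that
order, `A(P)` is the ring of elements whose Archimedean class is nonnegative, i.e. the valuation
ring of the Archimedean valuation `ArchimedeanClass.addValuation K`, and the non-units of that
valuation ring are the elements of positive class, which are exactly the infinitesimals `I(P)`.
-/

namespace IsOrdering

variable {K : Type*} [Field K] {P : Set K}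

lemma mul_self_mem (hP : IsOrdering P) (x : K) : x * x ∈ P := by
  rcases hP.2.2.2 x with h | h
  · exact hP.2.1 x h x h
  · simpa using hP.2.1 _ h _ h

def toRingPreordering (hP : IsOrdering P) : RingPreordering K :=
  .mk' P (hP.1 _ · _) (hP.2.1 _ · _) hP.mul_self_mem hP.2.2.1

def toRingCone (hP : IsOrdering P) : RingCone K where
  __ := hP.toRingPreordering.toSubsemiring
  eq_zero_of_mem_of_neg_mem' :=
    RingPreordering.eq_zero_of_mem_of_neg_mem (P := hP.toRingPreordering)

instance (hP : IsOrdering P) : HasMemOrNegMem hP.toRingCone := ⟨hP.2.2.2⟩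

noncomputable abbrev toLinearOrder (hP : IsOrdering P) : LinearOrder K :=
  have := Classical.decPred (· ∈ hP.toRingCone)
  .mkOfAddGroupCone hP.toRingCone

lemma le_iff (hP : IsOrdering P) {x y : K} :
    letI := hP.toLinearOrder
    x ≤ y ↔ y - x ∈ P :=
  Iff.rfl

lemma isStrictOrderedRing (hP : IsOrdering P) :
    letI := hP.toLinearOrder
    IsStrictOrderedRing K :=
  letI := hP.toLinearOrder
  haveI := IsOrderedRing.mkOfCone hP.toRingCone
  inferInstance

lemma mem_ratHull_iff (hP : IsOrdering P) {x : K} :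
    letI := hP.toLinearOrder
    x ∈ ratHull P ↔ ∃ r : ℚ, |x| ≤ r := by
  have := hP.isStrictOrderedRing
  simp only [abs_le]
  simp only [hP.le_iff, sub_neg_eq_add]
  rfl

lemma mem_ratInfinitesimals_iff (hP : IsOrdering P) {x : K} :
    letI := hP.toLinearOrder
    x ∈ ratInfinitesimals P ↔ ∀ r : ℚ, 0 < r → |x| ≤ r := by
  have := hP.isStrictOrderedRing
  simp only [abs_le]
  simp only [hP.le_iff, sub_neg_eq_add]
  rfl

end IsOrdering

namespace ArchimedeanClass

variable {K : Type*} [Field K] [LinearOrder K] [IsStrictOrderedRing K] {x : K}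

theorem mk_nonneg_iff_exists_abs_le_ratCast : 0 ≤ mk x ↔ ∃ r : ℚ, |x| ≤ r := by
  rw [← mk_abs]
  constructor
  · intro h
    obtain ⟨n, hn⟩ := exists_nat_ge_of_mk_nonneg h
    exact ⟨n, mod_cast hn⟩
  · rintro ⟨r, h⟩
    exact (mk_ratCast_nonneg r).trans (by simpa using min_le_mk_of_le_of_le (abs_nonneg x) h)

theorem mk_pos_iff_forall_abs_le_ratCast : 0 < mk x ↔ ∀ r : ℚ, 0 < r → |x| ≤ r := by
  rw [← mk_one, ← not_le, mk_le_mk_iff_ratCast]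
  push Not
  simp only [abs_one, mul_one]
  refine ⟨fun h r hr => (h r hr).le, fun h r hr => ?_⟩
  calc |x| ≤ ((r / 2 : ℚ) : K) := h _ (by positivity)
    _ < r := by exact_mod_cast half_lt_self hr

end ArchimedeanClass

open ArchimedeanClass IsLocalRing in
/-- For an ordering `P` of a field `K`: `A(P)` is a valuation subring of `K`, `I(P)` is an ideal
of `A(P)` which is its unique maximal ideal, and the units of `A(P)` are `A(P) \ I(P)`. -/
theorem stmt4 {K : Type*} [Field K] (P : Set K) (hP : IsOrdering P) :
    ∃ A : Subring K, (A : Set K) = ratHull P ∧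
      (∀ x : K, x ≠ 0 → x ∈ A ∨ x⁻¹ ∈ A) ∧
      ∃ I : Ideal A, (∀ a : A, a ∈ I ↔ (a : K) ∈ ratInfinitesimals P) ∧
        I.IsMaximal ∧ (∀ J : Ideal A, J.IsMaximal → J = I) ∧
        ∀ a : A, IsUnit a ↔ (a : K) ∉ ratInfinitesimals P := by
  let := hP.toLinearOrder
  have := hP.isStrictOrderedRing
  let V := (addValuation K).toValuation.valuationSubring
  have : IsLocalRing V.toSubring := inferInstanceAs (IsLocalRing V)
  have mem_maximalIdeal_iff (a : V.toSubring) :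
      a ∈ maximalIdeal V.toSubring ↔ a.1 ∈ ratInfinitesimals P := by
    rw [hP.mem_ratInfinitesimals_iff, ← mk_pos_iff_forall_abs_le_ratCast]
    exact FiniteElement.not_isUnit_iff_mk_pos (x := a)
  refine ⟨V.toSubring, ?_, fun x _ => V.mem_or_inv_mem x, maximalIdeal _, mem_maximalIdeal_iff,
    maximalIdeal.isMaximal _, fun J hJ => eq_maximalIdeal hJ, fun a => ?_⟩
  · ext x
    exact mk_nonneg_iff_exists_abs_le_ratCast.trans hP.mem_ratHull_iff.symm
  · rw [← mem_maximalIdeal_iff, mem_maximalIdeal, mem_nonunits_iff, not_not]
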